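/- Let X, Y, Z, M be random variables on a common probability space, each taking values in a finite set. If I(X ; Y | M) = 0, H(Z | (M, X)) = 0 and H(Z | (M, Y)) = 0, then I((X, Z) ; (Y, Z) | M) = 0, i.e., the Markov chain (X,Z) – M – (Y,Z) holds. -/
import Mathlib


open MeasureTheory ProbabilityTheory Real
open scoped ENNReal

/-- The probability that the random variable `X` takes the value `x`. -/
noncomputable def pm {Ω S : Type*} [MeasurableSpace Ω] (μ : Measure Ω) (X : Ω → S) (x : S) : ℝ :=
  (μ (X ⁻¹' {x})).toReal

/-- Shannon entropy (with natural logarithm) of a finite-valued random variable. -/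
noncomputable def entH {Ω S : Type*} [MeasurableSpace Ω] [Fintype S]
    (μ : Measure Ω) (X : Ω → S) : ℝ :=
  ∑ x : S, Real.negMulLog (pm μ X x)

/-- Conditional entropy `H(X | Y)`. -/
noncomputable def condEnt {Ω S T : Type*} [MeasurableSpace Ω] [Fintype S] [Fintype T]
    (μ : Measure Ω) (X : Ω → S) (Y : Ω → T) : ℝ :=
  entH μ (fun ω => (X ω, Y ω)) - entH μ Y

/-- Mutual information `I(X ; Y)`. -/
noncomputable def mutInf {Ω S T : Type*} [MeasurableSpace Ω] [Fintype S] [Fintype T]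
    (μ : Measure Ω) (X : Ω → S) (Y : Ω → T) : ℝ :=
  entH μ X + entH μ Y - entH μ (fun ω => (X ω, Y ω))

/-- Conditional mutual information `I(X ; Y | Z)`. -/
noncomputable def condMutInf {Ω S T U : Type*} [MeasurableSpace Ω] [Fintype S] [Fintype T]
    [Fintype U] (μ : Measure Ω) (X : Ω → S) (Y : Ω → T) (Z : Ω → U) : ℝ :=
  entH μ (fun ω => (X ω, Z ω)) + entH μ (fun ω => (Y ω, Z ω))
    - entH μ (fun ω => ((X ω, Y ω), Z ω)) - entH μ Z

/-! ### Auxiliary analytic lemmas about `negMulLog` -/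

lemma negMulLog_add_le' {p q : ℝ} (hp : 0 ≤ p) (hq : 0 ≤ q) :
    Real.negMulLog (p + q) ≤ Real.negMulLog p + Real.negMulLog q := by
  rcases hp.eq_or_lt with h | hp'
  · simp [← h]
  rcases hq.eq_or_lt with h | hq'
  · simp [← h]
  have h1 : Real.log p ≤ Real.log (p+q) := Real.log_le_log hp' (by linarith)
  have h2 : Real.log q ≤ Real.log (p+q) := Real.log_le_log hq' (by linarith)
  simp only [Real.negMulLog]
  nlinarith [mul_le_mul_of_nonneg_left h1 hp'.le, mul_le_mul_of_nonneg_left h2 hq'.le]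

lemma negMulLog_add_lt' {p q : ℝ} (hp : 0 < p) (hq : 0 < q) :
    Real.negMulLog (p + q) < Real.negMulLog p + Real.negMulLog q := by
  have h1 : Real.log p < Real.log (p+q) := Real.log_lt_log hp (by linarith)
  have h2 : Real.log q < Real.log (p+q) := Real.log_lt_log hq (by linarith)
  simp only [Real.negMulLog]
  nlinarith [mul_lt_mul_of_pos_left h1 hp, mul_lt_mul_of_pos_left h2 hq]

lemma negMulLog_sum_le' {ι : Type*} (s : Finset ι) (a : ι → ℝ) (ha : ∀ i ∈ s, 0 ≤ a i) :
    Real.negMulLog (∑ i ∈ s, a i) ≤ ∑ i ∈ s, Real.negMulLog (a i) := by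
  induction s using Finset.cons_induction with
  | empty => simp
  | cons i s hi ih =>
    rw [Finset.sum_cons, Finset.sum_cons]
    calc Real.negMulLog (a i + ∑ j ∈ s, a j)
        ≤ Real.negMulLog (a i) + Real.negMulLog (∑ j ∈ s, a j) :=
          negMulLog_add_le' (ha i (Finset.mem_cons_self _ _))
            (Finset.sum_nonneg fun j hj => ha j (Finset.mem_cons_of_mem hj))
      _ ≤ Real.negMulLog (a i) + ∑ j ∈ s, Real.negMulLog (a j) := by
          have := ih (fun j hj => ha j (Finset.mem_cons_of_mem hj))
          linarith

lemma uniq_of_negMulLog_sum_eq {ι : Type*} [Fintype ι] [DecidableEq ι] {a : ι → ℝ}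
    (ha : ∀ i, 0 ≤ a i)
    (heq : Real.negMulLog (∑ i, a i) = ∑ i, Real.negMulLog (a i))
    {i j : ι} (hij : i ≠ j) (hi : 0 < a i) (hj : 0 < a j) : False := by
  have hjmem : j ∈ Finset.univ.erase i := Finset.mem_erase.2 ⟨hij.symm, Finset.mem_univ j⟩
  set s : Finset ι := (Finset.univ.erase i).erase j with hs
  have hR : 0 ≤ ∑ k ∈ s, a k := Finset.sum_nonneg fun k _ => ha k
  have hsplit : ∑ k, a k = a i + (a j + ∑ k ∈ s, a k) := by
    rw [← Finset.add_sum_erase _ _ (Finset.mem_univ i), ← Finset.add_sum_erase _ _ hjmem]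
  have hsplit2 : ∑ k, Real.negMulLog (a k)
      = Real.negMulLog (a i) + (Real.negMulLog (a j) + ∑ k ∈ s, Real.negMulLog (a k)) := by
    rw [← Finset.add_sum_erase _ _ (Finset.mem_univ i), ← Finset.add_sum_erase _ _ hjmem]
  have c1 : Real.negMulLog (∑ k, a k)
      ≤ Real.negMulLog (a i + a j) + Real.negMulLog (∑ k ∈ s, a k) := by
    rw [hsplit, ← add_assoc]
    exact negMulLog_add_le' (by linarith) hR
  have c2 : Real.negMulLog (a i + a j) < Real.negMulLog (a i) + Real.negMulLog (a j) :=
    negMulLog_add_lt' hi hj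
  have c3 : Real.negMulLog (∑ k ∈ s, a k) ≤ ∑ k ∈ s, Real.negMulLog (a k) :=
    negMulLog_sum_le' s a fun k _ => ha k
  rw [heq, hsplit2] at c1
  linarith

/-! ### Auxiliary lemmas about `pm` and `entH` -/

section Aux
variable {Ω : Type*} [MeasurableSpace Ω] {μ : Measure Ω}

lemma pm_congr' {S : Type*} {X X' : Ω → S} (h : X =ᵐ[μ] X') (x : S) :
    pm μ X x = pm μ X' x := by
  unfold pm
  congr 1
  apply measure_congr
  rw [Filter.eventuallyEq_set]
  filter_upwards [h] with ω hω
  simp [Set.mem_preimage, hω]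

lemma entH_congr' {S : Type*} [Fintype S] {X X' : Ω → S} (h : X =ᵐ[μ] X') :
    entH μ X = entH μ X' :=
  Finset.sum_congr rfl fun x _ => by rw [pm_congr' h]

lemma entH_comp_inj {S T : Type*} [Fintype S] [Fintype T] (V : Ω → S)
    {e : S → T} (he : Function.Injective e) :
    entH μ (fun ω => e (V ω)) = entH μ V := by
  classical
  unfold entH
  set F : T → ℝ := fun t => Real.negMulLog (pm μ (fun ω => e (V ω)) t) with hF
  have h0 : ∀ t ∈ Finset.univ, t ∉ Finset.univ.image e → F t = 0 := by
    intro t _ ht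
    have : (fun ω => e (V ω)) ⁻¹' {t} = ∅ := by
      ext ω
      simp only [Set.mem_preimage, Set.mem_singleton_iff, Set.mem_empty_iff_false, iff_false]
      intro hc
      exact ht (Finset.mem_image.2 ⟨V ω, Finset.mem_univ _, hc⟩)
    simp [hF, pm, this]
  calc ∑ t : T, F t = ∑ t ∈ Finset.univ.image e, F t :=
        (Finset.sum_subset (Finset.subset_univ _) h0).symm
    _ = ∑ s : S, F (e s) := Finset.sum_image fun a _ b _ hab => he hab
    _ = ∑ s : S, Real.negMulLog (pm μ V s) := by
        apply Finset.sum_congr rfl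
        intro s _
        have : (fun ω => e (V ω)) ⁻¹' {e s} = V ⁻¹' {s} := by
          ext ω; simp [he.eq_iff]
        rw [hF]
        simp only [pm, this]

lemma pm_nonneg' {S : Type*} (X : Ω → S) (x : S) : 0 ≤ pm μ X x := ENNReal.toReal_nonneg

lemma pm_marginal {S T : Type*} [Fintype S] [IsFiniteMeasure μ]
    [MeasurableSpace S] [MeasurableSingletonClass S]
    (Z : Ω → S) (V : Ω → T) (hZ : Measurable Z) (hV : ∀ v, MeasurableSet (V ⁻¹' {v})) (v : T) :
    pm μ V v = ∑ z : S, pm μ (fun ω => (Z ω, V ω)) (z, v) := by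
  unfold pm
  have hdec : V ⁻¹' {v} = ⋃ z : S, (fun ω => (Z ω, V ω)) ⁻¹' {(z, v)} := by
    ext ω
    simp [Prod.ext_iff]
  have hmeas : ∀ z : S, MeasurableSet ((fun ω => (Z ω, V ω)) ⁻¹' {(z, v)}) := by
    intro z
    have : (fun ω => (Z ω, V ω)) ⁻¹' {(z, v)} = Z ⁻¹' {z} ∩ V ⁻¹' {v} := by
      ext ω; simp [Prod.ext_iff]
    rw [this]
    exact (hZ (measurableSet_singleton z)).inter (hV v)
  have hdisj : Pairwise (Function.onFun Disjoint
      fun z : S => (fun ω => (Z ω, V ω)) ⁻¹' {(z, v)}) := by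
    intro z₁ z₂ hz
    refine Set.disjoint_left.2 fun ω h₁ h₂ => hz ?_
    simp only [Set.mem_preimage, Set.mem_singleton_iff, Prod.ext_iff] at h₁ h₂
    rw [← h₁.1, ← h₂.1]
  rw [hdec, measure_iUnion hdisj hmeas, tsum_fintype, ENNReal.toReal_sum]
  intro z _
  exact measure_ne_top μ _

/-- If `H(Z | V) = 0` then `Z` is almost surely a function of `V`. -/
lemma exists_comp_of_condEnt_zero {S T : Type*} [Fintype S] [Fintype T] [Nonempty S]
    [MeasurableSpace S] [MeasurableSingletonClass S] [IsProbabilityMeasure μ]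
    (Z : Ω → S) (V : Ω → T) (hZ : Measurable Z) (hV : ∀ v, MeasurableSet (V ⁻¹' {v}))
    (h : condEnt μ Z V = 0) : ∃ f : T → S, Z =ᵐ[μ] fun ω => f (V ω) := by
  classical
  set p : S → T → ℝ := fun z v => pm μ (fun ω => (Z ω, V ω)) (z, v) with hp
  have hpnn : ∀ z v, 0 ≤ p z v := fun z v => pm_nonneg' _ _
  have hA : ∀ v, pm μ V v = ∑ z : S, p z v := pm_marginal Z V hZ hV
  -- the equality of entropies
  have hent : entH μ V = entH μ (fun ω => (Z ω, V ω)) := by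
    have := h
    unfold condEnt at this
    linarith
  -- rewrite both sides as sums over v
  have hlhs : entH μ V = ∑ v : T, Real.negMulLog (∑ z : S, p z v) := by
    unfold entH
    exact Finset.sum_congr rfl fun v _ => by rw [hA]
  have hrhs : entH μ (fun ω => (Z ω, V ω)) = ∑ v : T, ∑ z : S, Real.negMulLog (p z v) := by
    unfold entH
    rw [Fintype.sum_prod_type]
    exact Finset.sum_comm
  have hsum : ∑ v : T, Real.negMulLog (∑ z : S, p z v)
      = ∑ v : T, ∑ z : S, Real.negMulLog (p z v) := by
    rw [← hlhs, ← hrhs, hent]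
  have hle : ∀ v ∈ Finset.univ, Real.negMulLog (∑ z : S, p z v)
      ≤ ∑ z : S, Real.negMulLog (p z v) := fun v _ =>
    negMulLog_sum_le' _ _ fun z _ => hpnn z v
  have hpt : ∀ v : T, Real.negMulLog (∑ z : S, p z v) = ∑ z : S, Real.negMulLog (p z v) :=
    fun v => (Finset.sum_eq_sum_iff_of_le hle).1 hsum v (Finset.mem_univ v)
  -- uniqueness of the positive atom
  have huniq : ∀ v : T, ∀ z₁ z₂ : S, p z₁ v ≠ 0 → p z₂ v ≠ 0 → z₁ = z₂ := by
    intro v z₁ z₂ h₁ h₂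
    by_contra hne
    exact uniq_of_negMulLog_sum_eq (fun z => hpnn z v) (hpt v) hne
      ((hpnn z₁ v).lt_of_ne (Ne.symm h₁)) ((hpnn z₂ v).lt_of_ne (Ne.symm h₂))
  -- define f
  set f : T → S := fun v =>
    if hv : ∃ z : S, p z v ≠ 0 then hv.choose else Classical.arbitrary S with hf
  have hfspec : ∀ v z, p z v ≠ 0 → z = f v := by
    intro v z hz
    have hv : ∃ z : S, p z v ≠ 0 := ⟨z, hz⟩
    rw [hf]
    simp only [dif_pos hv]
    exact huniq v z hv.choose hz hv.choose_spec
  -- almost sure equality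
  refine ⟨f, ?_⟩
  show ∀ᵐ ω ∂μ, Z ω = f (V ω)
  refine ae_iff.2 ?_
  have hsubset : {ω | ¬ Z ω = f (V ω)} ⊆
      ⋃ (z : S), ⋃ (v : T), ⋃ (_ : z ≠ f v), (fun ω => (Z ω, V ω)) ⁻¹' {(z, v)} := by
    intro ω hω
    simp only [Set.mem_setOf_eq] at hω
    simp only [Set.mem_iUnion, Set.mem_preimage, Set.mem_singleton_iff]
    exact ⟨Z ω, V ω, hω, rfl⟩
  refine measure_mono_null hsubset ?_
  refine measure_iUnion_null fun z => measure_iUnion_null fun v => measure_iUnion_null fun hzv => ?_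
  have : p z v = 0 := by
    by_contra hc
    exact hzv (hfspec v z hc)
  rw [hp] at this
  simp only [pm] at this
  exact (ENNReal.toReal_eq_zero_iff _).1 this |>.resolve_right (measure_ne_top μ _)

end Aux

/-- If `I(X ; Y | M) = 0`, `H(Z | (M,X)) = 0` and `H(Z | (M,Y)) = 0`, then the Markov chain
`(X,Z) – M – (Y,Z)` holds, i.e. `I((X,Z) ; (Y,Z) | M) = 0`. -/
theorem markov_chain_XZ_M_YZ
    {Ω : Type*} [MeasurableSpace Ω] (μ : Measure Ω) [IsProbabilityMeasure μ]
    {S T W U : Type*} [Fintype S] [Fintype T] [Fintype W] [Fintype U]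
    [MeasurableSpace S] [MeasurableSingletonClass S]
    [MeasurableSpace T] [MeasurableSingletonClass T]
    [MeasurableSpace W] [MeasurableSingletonClass W]
    [MeasurableSpace U] [MeasurableSingletonClass U]
    (X : Ω → S) (Y : Ω → T) (Z : Ω → W) (M : Ω → U)
    (hX : Measurable X) (hY : Measurable Y) (hZ : Measurable Z) (hM : Measurable M)
    (hXY : condMutInf μ X Y M = 0)
    (hZX : condEnt μ Z (fun ω => (M ω, X ω)) = 0)
    (hZY : condEnt μ Z (fun ω => (M ω, Y ω)) = 0) :
    condMutInf μ (fun ω => (X ω, Z ω)) (fun ω => (Y ω, Z ω)) M = 0 := by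
  have hΩ : Nonempty Ω := by
    by_contra hc
    rw [not_nonempty_iff] at hc
    have h1 : μ Set.univ = 1 := measure_univ
    rw [Set.univ_eq_empty_iff.2 hc, measure_empty] at h1
    exact zero_ne_one h1
  have hW : Nonempty W := ⟨Z hΩ.some⟩
  -- Z is a.e. a function of (M, X)
  obtain ⟨f, hfa⟩ := exists_comp_of_condEnt_zero Z (fun ω => (M ω, X ω)) hZ
    (fun v => (hM.prodMk hX) (measurableSet_singleton v)) hZX
  -- Z is a.e. a function of (M, Y)
  obtain ⟨g, hga⟩ := exists_comp_of_condEnt_zero Z (fun ω => (M ω, Y ω)) hZ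
    (fun v => (hM.prodMk hY) (measurableSet_singleton v)) hZY
  -- key entropy identities
  have e1 : entH μ (fun ω => ((X ω, Z ω), M ω)) = entH μ (fun ω => (X ω, M ω)) := by
    have hae : (fun ω => ((X ω, Z ω), M ω))
        =ᵐ[μ] fun ω => ((X ω, f (M ω, X ω)), M ω) := by
      filter_upwards [hfa] with ω hω
      rw [hω]
    rw [entH_congr' hae]
    exact entH_comp_inj (fun ω => (X ω, M ω))
      (e := fun q : S × U => ((q.1, f (q.2, q.1)), q.2))
      (fun a b hab => by
        simp only [Prod.mk.injEq] at hab
        exact Prod.ext hab.1.1 hab.2)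
  have e2 : entH μ (fun ω => ((Y ω, Z ω), M ω)) = entH μ (fun ω => (Y ω, M ω)) := by
    have hae : (fun ω => ((Y ω, Z ω), M ω))
        =ᵐ[μ] fun ω => ((Y ω, g (M ω, Y ω)), M ω) := by
      filter_upwards [hga] with ω hω
      rw [hω]
    rw [entH_congr' hae]
    exact entH_comp_inj (fun ω => (Y ω, M ω))
      (e := fun q : T × U => ((q.1, g (q.2, q.1)), q.2))
      (fun a b hab => by
        simp only [Prod.mk.injEq] at hab
        exact Prod.ext hab.1.1 hab.2)
  have e3 : entH μ (fun ω => (((X ω, Z ω), (Y ω, Z ω)), M ω))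
      = entH μ (fun ω => ((X ω, Y ω), M ω)) := by
    have hae : (fun ω => (((X ω, Z ω), (Y ω, Z ω)), M ω))
        =ᵐ[μ] fun ω => (((X ω, f (M ω, X ω)), (Y ω, f (M ω, X ω))), M ω) := by
      filter_upwards [hfa] with ω hω
      rw [hω]
    rw [entH_congr' hae]
    have h := entH_comp_inj (μ := μ) (fun ω => ((X ω, Y ω), M ω))
      (e := fun q : (S × T) × U => (((q.1.1, f (q.2, q.1.1)), (q.1.2, f (q.2, q.1.1))), q.2))
      (fun a b hab => by
        simp only [Prod.mk.injEq] at hab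
        exact Prod.ext (Prod.ext hab.1.1.1 hab.1.2.1) hab.2)
    simpa using h
  unfold condMutInf at hXY ⊢
  rw [e1, e2, e3]
  linarith
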